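/- arXiv:1805.00182 — 2 statements merged into one kernel-verified Lean document; each statement's English description precedes it below -/
import Mathlib

section
/- Let Q* be the extended quiver of a quiver Q (extra vertex 0, dimension 1 at vertex 0) with dimension vector m* = (1, m), m ≠ 0. Take the stability parameter ξ⁺ with ξ⁺_i = √−1 for all i ∈ V(Q) and Re(ξ⁺₀) < 0. Then a Q*-representation 𝕍* with dimension vector m* is ξ⁺-semistable if and only if it is ξ⁺-stable, if and only if the images of the linear maps 𝔼_{0,i} → V_i (for all i ∈ V(Q)) generate ⊕_i V_i as a module over the path algebra ℂ[Q]. -/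
/-!
Since `F₀ ⊆ ℂ`, a subrepresentation has `F₀ = 0` or `F₀ = ℂ`. If `F₀ = 0`, its central charge lies
on the positive imaginary axis, of phase `π / 2`, while `ξ₀ + (dim W) √−1` lies in the open second
quadrant, so such a subrepresentation never destabilizes. If `F₀ = ℂ`, the subrepresentation
contains every `α i e`, and its central charge `ξ₀ + (dim F) √−1` has real part `Re ξ₀ < 0`, so
its phase strictly decreases as `dim F` grows. Hence a proper one already violates semistability,
and proper ones exist exactly when the `α i e` fail to generate `W`.
-/

open Complex Real

namespace Complex

theorem pi_div_two_lt_arg {z : ℂ} (hre : z.re < 0) (him : 0 ≤ z.im) : π / 2 < arg z := by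
  have := abs_arg_le_pi_div_two_iff.not.2 hre.not_ge
  rwa [not_le, abs_of_nonneg (arg_nonneg_iff.2 him)] at this

theorem strictAntiOn_arg_add_mul_I {ξ : ℂ} (hre : ξ.re < 0) (him : 0 ≤ ξ.im) :
    StrictAntiOn (fun t : ℝ => arg (ξ + t * I)) (Set.Ici 0) := by
  intro s (hs : 0 ≤ s) t (ht : 0 ≤ t) hst
  have h_re (r : ℝ) : (ξ + r * I).re = ξ.re := by simp
  have h_im (r : ℝ) : (ξ + r * I).im = ξ.im + r := by simp
  have h_ne (r : ℝ) : ξ + r * I ≠ 0 := fun h => hre.ne (by simpa [h] using (h_re r).symm)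
  have h_norm : ‖ξ + s * I‖ < ‖ξ + t * I‖ := by
    rw [norm_def, norm_def]
    refine Real.sqrt_lt_sqrt (normSq_nonneg _) ?_
    simp only [normSq_apply, h_re, h_im]
    nlinarith
  have h_ratio : ξ.re / ‖ξ + s * I‖ < ξ.re / ‖ξ + t * I‖ := by
    simpa [neg_div] using div_lt_div_of_pos_left (neg_pos.2 hre) (norm_pos_iff.2 (h_ne s)) h_norm
  simp only
  rw [arg_of_im_nonneg_of_ne_zero (by rw [h_im]; positivity) (h_ne s),
    arg_of_im_nonneg_of_ne_zero (by rw [h_im]; positivity) (h_ne t), h_re, h_re]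
  exact strictAntiOn_arccos (abs_le.1 (h_re s ▸ abs_re_div_norm_le_one _))
    (abs_le.1 (h_re t ▸ abs_re_div_norm_le_one _)) h_ratio

end Complex

namespace ExtendedQuiver

open Module

variable {VQ : Type*} {Eij : VQ → VQ → Type*} {a b : VQ → ℕ} {W : VQ → Type*}
  [∀ i, AddCommGroup (W i)] [∀ i, Module ℂ (W i)]

/-- `(F₀, F)` is a subrepresentation of the `Q*`-representation on `(ℂ, W)` whose arrows
`i → j`, `0 → i` and `i → 0` act by `u i j e`, `x ↦ x • α i e` and `β i e`. -/
def IsSubrep (u : ∀ i j, Eij i j → (W i →ₗ[ℂ] W j)) (α : ∀ i, Fin (a i) → W i)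
    (β : ∀ i, Fin (b i) → (W i →ₗ[ℂ] ℂ)) (F₀ : Submodule ℂ ℂ) (F : ∀ i, Submodule ℂ (W i)) :
    Prop :=
  (∀ i j (e : Eij i j), (F i).map (u i j e) ≤ F j)
    ∧ (∀ i (e : Fin (a i)), ∀ x ∈ F₀, x • α i e ∈ F i)
    ∧ (∀ i (e : Fin (b i)), ∀ w ∈ F i, β i e w ∈ F₀)

def Generates (u : ∀ i j, Eij i j → (W i →ₗ[ℂ] W j)) (α : ∀ i, Fin (a i) → W i) : Prop :=
  ∀ F : ∀ i, Submodule ℂ (W i), (∀ i j (e : Eij i j), (F i).map (u i j e) ≤ F j) →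
    (∀ i (e : Fin (a i)), α i e ∈ F i) → ∀ i, F i = ⊤

section Fintype

variable [Fintype VQ]

noncomputable def totalDim (F : ∀ i, Submodule ℂ (W i)) : ℕ :=
  ∑ i, finrank ℂ (F i)

/-- `Z_{ξ⁺}` evaluated at the dimension vector `(dim F₀, dim F)`. -/
noncomputable def centralCharge (ξ₀ : ℂ) (F₀ : Submodule ℂ ℂ) (F : ∀ i, Submodule ℂ (W i)) : ℂ :=
  (finrank ℂ F₀ : ℂ) * ξ₀ + ∑ i, (finrank ℂ (F i) : ℂ) * I

section Stability

variable (u : ∀ i j, Eij i j → (W i →ₗ[ℂ] W j)) (α : ∀ i, Fin (a i) → W i)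
  (β : ∀ i, Fin (b i) → (W i →ₗ[ℂ] ℂ)) (ξ₀ : ℂ)

def IsSemistable : Prop :=
  ∀ F₀ F, IsSubrep u α β F₀ F → (F₀ ≠ ⊥ ∨ ∃ i, F i ≠ ⊥) → ¬ (F₀ = ⊤ ∧ ∀ i, F i = ⊤) →
    (centralCharge ξ₀ F₀ F).arg ≤ (centralCharge ξ₀ ⊤ fun i => (⊤ : Submodule ℂ (W i))).arg

def IsStable : Prop :=
  ∀ F₀ F, IsSubrep u α β F₀ F → (F₀ ≠ ⊥ ∨ ∃ i, F i ≠ ⊥) → ¬ (F₀ = ⊤ ∧ ∀ i, F i = ⊤) →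
    (centralCharge ξ₀ F₀ F).arg < (centralCharge ξ₀ ⊤ fun i => (⊤ : Submodule ℂ (W i))).arg

variable {u α β ξ₀}

theorem IsStable.isSemistable (h : IsStable u α β ξ₀) : IsSemistable u α β ξ₀ :=
  fun F₀ F hsub hne hnt => (h F₀ F hsub hne hnt).le

end Stability

section CentralCharge

variable (ξ₀ : ℂ) (F : ∀ i, Submodule ℂ (W i))

theorem centralCharge_top : centralCharge ξ₀ ⊤ F = ξ₀ + (totalDim F : ℝ) * I := by
  simp [centralCharge, totalDim, Finset.sum_mul]

theorem centralCharge_bot : centralCharge ξ₀ ⊥ F = (totalDim F : ℝ) * I := by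
  simp [centralCharge, totalDim, Finset.sum_mul]

variable {ξ₀ F}

theorem arg_centralCharge_top_lt (hre : ξ₀.re < 0) (him : 0 < ξ₀.im)
    {G : ∀ i, Submodule ℂ (W i)} (h : totalDim F < totalDim G) :
    arg (centralCharge ξ₀ ⊤ G) < arg (centralCharge ξ₀ ⊤ F) := by
  rw [centralCharge_top, centralCharge_top]
  exact strictAntiOn_arg_add_mul_I hre him.le (Set.mem_Ici.2 (Nat.cast_nonneg _))
    (Set.mem_Ici.2 (Nat.cast_nonneg _)) (by exact_mod_cast h)

theorem pi_div_two_lt_arg_centralCharge_top (hre : ξ₀.re < 0) (him : 0 < ξ₀.im) :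
    π / 2 < arg (centralCharge ξ₀ ⊤ F) := by
  rw [centralCharge_top]
  exact pi_div_two_lt_arg (by simpa using hre) (by simp; positivity)

end CentralCharge

variable [∀ i, FiniteDimensional ℂ (W i)]

theorem totalDim_lt_totalDim_top {F : ∀ i, Submodule ℂ (W i)} {i₀ : VQ} (h : F i₀ ≠ ⊤) :
    totalDim F < totalDim fun i => (⊤ : Submodule ℂ (W i)) :=
  Finset.sum_lt_sum (fun _ _ => Submodule.finrank_mono le_top)
    ⟨i₀, Finset.mem_univ _, Submodule.finrank_lt_finrank_of_lt (lt_top_iff_ne_top.2 h)⟩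

theorem totalDim_pos {F : ∀ i, Submodule ℂ (W i)} {i₀ : VQ} (h : F i₀ ≠ ⊥) : 0 < totalDim F :=
  Finset.sum_pos' (fun _ _ => Nat.zero_le _)
    ⟨i₀, Finset.mem_univ _, Nat.pos_of_ne_zero (mt Submodule.finrank_eq_zero.1 h)⟩

variable {u : ∀ i j, Eij i j → (W i →ₗ[ℂ] W j)} {α : ∀ i, Fin (a i) → W i}
  {β : ∀ i, Fin (b i) → (W i →ₗ[ℂ] ℂ)} {ξ₀ : ℂ}

theorem generates_of_isSemistable (hre : ξ₀.re < 0) (him : 0 < ξ₀.im)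
    (h : IsSemistable u α β ξ₀) : Generates u α := by
  intro F hF hα
  by_contra! hF_ne
  obtain ⟨i₀, hi₀⟩ := hF_ne
  have hsub : IsSubrep u α β ⊤ F :=
    ⟨hF, fun i e x _ => (F i).smul_mem x (hα i e), fun _ _ _ _ => Submodule.mem_top⟩
  exact (h ⊤ F hsub (Or.inl top_ne_bot) (fun h => hi₀ (h.2 i₀))).not_gt
    (arg_centralCharge_top_lt hre him (totalDim_lt_totalDim_top hi₀))

theorem isStable_of_generates (hre : ξ₀.re < 0) (him : 0 < ξ₀.im) (h : Generates u α) :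
    IsStable u α β ξ₀ := by
  intro F₀ F hsub hne hnt
  rcases Ideal.eq_bot_or_top F₀ with rfl | rfl
  · obtain ⟨i₀, hi₀⟩ := hne.resolve_left (not_not.2 rfl)
    rw [centralCharge_bot, arg_real_mul _ (by exact_mod_cast totalDim_pos hi₀), arg_I]
    exact pi_div_two_lt_arg_centralCharge_top hre him
  · exact absurd ⟨rfl, h F hsub.1 fun i e => by simpa using hsub.2.1 i e 1 Submodule.mem_top⟩ hnt

end Fintype

end ExtendedQuiver

theorem extended_quiver_xi_plus_stability_general
    (VQ : Type*) [Fintype VQ]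
    (Eij : VQ → VQ → Type*)
    (a b : VQ → ℕ)
    (W : VQ → Type*) [∀ i, AddCommGroup (W i)] [∀ i, Module ℂ (W i)]
    [∀ i, FiniteDimensional ℂ (W i)]
    (u : ∀ i j, Eij i j → (W i →ₗ[ℂ] W j))
    (α : ∀ i, Fin (a i) → W i)
    (β : ∀ i, Fin (b i) → (W i →ₗ[ℂ] ℂ))
    (ξ₀ : ℂ) (hξ₀im : 0 < ξ₀.im) (hξ₀re : ξ₀.re < 0) :
    -- a subrepresentation of `𝕍*` is a pair `(F₀, F)` of families of subspaces
    -- closed under all the structure maps of `Q*`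
    let IsSubrep : Submodule ℂ ℂ → (∀ i, Submodule ℂ (W i)) → Prop := fun F₀ F =>
      (∀ i j (e : Eij i j), (F i).map (u i j e) ≤ F j)
      ∧ (∀ i (e : Fin (a i)), ∀ x ∈ F₀, x • α i e ∈ F i)
      ∧ (∀ i (e : Fin (b i)), ∀ w ∈ F i, β i e w ∈ F₀)
    let Z : Submodule ℂ ℂ → (∀ i, Submodule ℂ (W i)) → ℂ := fun F₀ F =>
      (Module.finrank ℂ F₀ : ℂ) * ξ₀
        + ∑ i, (Module.finrank ℂ (F i) : ℂ) * Complex.I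
    let Semistable : Prop := ∀ F₀ F, IsSubrep F₀ F →
      (F₀ ≠ ⊥ ∨ ∃ i, F i ≠ ⊥) → ¬ (F₀ = ⊤ ∧ ∀ i, F i = ⊤) →
      (Z F₀ F).arg ≤ (Z ⊤ fun _ => ⊤).arg
    let Stable : Prop := ∀ F₀ F, IsSubrep F₀ F →
      (F₀ ≠ ⊥ ∨ ∃ i, F i ≠ ⊥) → ¬ (F₀ = ⊤ ∧ ∀ i, F i = ⊤) →
      (Z F₀ F).arg < (Z ⊤ fun _ => ⊤).arg
    let Generates : Prop := ∀ F : ∀ i, Submodule ℂ (W i),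
      (∀ i j (e : Eij i j), (F i).map (u i j e) ≤ F j) →
      (∀ i (e : Fin (a i)), α i e ∈ F i) → ∀ i, F i = ⊤
    (Semistable ↔ Stable) ∧ (Stable ↔ Generates) := by
  intro IsSubrep Z Semistable Stable Generates
  have hSG : ExtendedQuiver.IsSemistable u α β ξ₀ → ExtendedQuiver.Generates u α :=
    ExtendedQuiver.generates_of_isSemistable hξ₀re hξ₀im
  have hGS : ExtendedQuiver.Generates u α → ExtendedQuiver.IsStable u α β ξ₀ :=
    ExtendedQuiver.isStable_of_generates hξ₀re hξ₀im
  exact ⟨⟨fun h => hGS (hSG h), ExtendedQuiver.IsStable.isSemistable⟩,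
    ⟨fun h => hSG (ExtendedQuiver.IsStable.isSemistable h), hGS⟩⟩

theorem extended_quiver_xi_plus_stability
    (VQ : Type*) [Fintype VQ]
    (Eij : VQ → VQ → Type*)
    (a b : VQ → ℕ) (c : ℕ)
    (W : VQ → Type*) [∀ i, AddCommGroup (W i)] [∀ i, Module ℂ (W i)]
    [∀ i, FiniteDimensional ℂ (W i)]
    (u : ∀ i j, Eij i j → (W i →ₗ[ℂ] W j))
    (α : ∀ i, Fin (a i) → W i)
    (β : ∀ i, Fin (b i) → (W i →ₗ[ℂ] ℂ))
    (γ : Fin c → ℂ)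
    (ξ₀ : ℂ) (hξ₀im : 0 < ξ₀.im) (hξ₀re : ξ₀.re < 0)
    (hm : ∃ i, Module.finrank ℂ (W i) ≠ 0) :
    -- a subrepresentation of `𝕍*` is a pair `(F₀, F)` of families of subspaces
    -- closed under all the structure maps of `Q*`
    let IsSubrep : Submodule ℂ ℂ → (∀ i, Submodule ℂ (W i)) → Prop := fun F₀ F =>
      (∀ i j (e : Eij i j), (F i).map (u i j e) ≤ F j)
      ∧ (∀ i (e : Fin (a i)), ∀ x ∈ F₀, x • α i e ∈ F i)
      ∧ (∀ i (e : Fin (b i)), ∀ w ∈ F i, β i e w ∈ F₀)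
    let Z : Submodule ℂ ℂ → (∀ i, Submodule ℂ (W i)) → ℂ := fun F₀ F =>
      (Module.finrank ℂ F₀ : ℂ) * ξ₀
        + ∑ i, (Module.finrank ℂ (F i) : ℂ) * Complex.I
    let Semistable : Prop := ∀ F₀ F, IsSubrep F₀ F →
      (F₀ ≠ ⊥ ∨ ∃ i, F i ≠ ⊥) → ¬ (F₀ = ⊤ ∧ ∀ i, F i = ⊤) →
      (Z F₀ F).arg ≤ (Z ⊤ fun _ => ⊤).arg
    let Stable : Prop := ∀ F₀ F, IsSubrep F₀ F →
      (F₀ ≠ ⊥ ∨ ∃ i, F i ≠ ⊥) → ¬ (F₀ = ⊤ ∧ ∀ i, F i = ⊤) →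
      (Z F₀ F).arg < (Z ⊤ fun _ => ⊤).arg
    let Generates : Prop := ∀ F : ∀ i, Submodule ℂ (W i),
      (∀ i j (e : Eij i j), (F i).map (u i j e) ≤ F j) →
      (∀ i (e : Fin (a i)), α i e ∈ F i) → ∀ i, F i = ⊤
    (Semistable ↔ Stable) ∧ (Stable ↔ Generates) :=
  extended_quiver_xi_plus_stability_general VQ Eij a b W u α β ξ₀ hξ₀im hξ₀re
end

section
/- Let d₁, d₂ be positive real numbers, and consider for each decomposition (β,1) = (β₁,n₁) + (β₂,n₂) with β_i = r_i F + k_i l (r_i, k_i ≥ 0 integers) the wall equation μ_{B,ω₀}(β₁,n₁) = μ_{B,ω₀}(β,1) with B = x·D + y·H and β = rF + kl, where ω₀·F = d₁, ω₀·l = d₂, D·l = −3, D·F = 1, H·l = 1, H·F = 0. Then whenever rk₁ − kr₁ ≠ 0, this wall equation is equivalent to the linear equation (3d₁ + d₂)x − d₁y = (r₁d₁ + k₁d₂ − n₁(rd₁ + kd₂))/(rk₁ − kr₁) in the (x,y)-plane. In particular every wall is a line parallel to the line y = (3 + d₂/d₁)x, so any two distinct walls are disjoint. -/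
/-!
STATEMENT 15: Wall computation on the elliptic Calabi–Yau 3-fold.  With
intersection numbers `H·l = 1`, `D·l = −3`, `H·F = 0`, `D·F = 1`,
`ω₀·F = d₁ > 0`, `ω₀·l = d₂ > 0`, `B = x·D + y·H`, `β = rF + kl`,
`β₁ = r₁F + k₁l`, and the slope `μ_{B,ω₀}(β', n') = (n' − B·β')/(ω₀·β')` where
`B·β' = r'x + k'(−3x + y)`, the wall equation
`μ_{B,ω₀}(β₁, n₁) = μ_{B,ω₀}(β, 1)` is, whenever `rk₁ − kr₁ ≠ 0`, equivalent to
`(3d₁ + d₂)x − d₁y = (r₁d₁ + k₁d₂ − n₁(rd₁ + kd₂))/(rk₁ − kr₁)`.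
In particular every wall is a line parallel to `y = (3 + d₂/d₁)x`, so two distinct
walls are disjoint.
-/
theorem elliptic_CY3_wall_equation
    (d₁ d₂ : ℝ) (hd₁ : 0 < d₁) (hd₂ : 0 < d₂)
    (r k r₁ k₁ n₁ : ℤ)
    (hr : 0 ≤ r) (hk : 0 ≤ k) (hr₁ : 0 ≤ r₁) (hk₁ : 0 ≤ k₁)
    (hβ : 0 < (r : ℝ) * d₁ + (k : ℝ) * d₂)
    (hβ₁ : 0 < (r₁ : ℝ) * d₁ + (k₁ : ℝ) * d₂)
    (hdet : r * k₁ - k * r₁ ≠ 0) :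
    (∀ x y : ℝ,
      ((n₁ : ℝ) - ((r₁ : ℝ) * x + (k₁ : ℝ) * (-3 * x + y)))
          / ((r₁ : ℝ) * d₁ + (k₁ : ℝ) * d₂)
        = ((1 : ℝ) - ((r : ℝ) * x + (k : ℝ) * (-3 * x + y)))
          / ((r : ℝ) * d₁ + (k : ℝ) * d₂)
      ↔ (3 * d₁ + d₂) * x - d₁ * y
          = ((r₁ : ℝ) * d₁ + (k₁ : ℝ) * d₂
              - (n₁ : ℝ) * ((r : ℝ) * d₁ + (k : ℝ) * d₂))
            / ((r : ℝ) * (k₁ : ℝ) - (k : ℝ) * (r₁ : ℝ)))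
    ∧ (∀ c c' : ℝ, c ≠ c' →
        Disjoint {p : ℝ × ℝ | (3 * d₁ + d₂) * p.1 - d₁ * p.2 = c}
          {p : ℝ × ℝ | (3 * d₁ + d₂) * p.1 - d₁ * p.2 = c'}) := by
  have hdetR : (r : ℝ) * (k₁ : ℝ) - (k : ℝ) * (r₁ : ℝ) ≠ 0 := by
    have : ((r * k₁ - k * r₁ : ℤ) : ℝ) ≠ 0 := Int.cast_ne_zero.mpr hdet
    push_cast at this
    exact this
  constructor
  · intro x y
    rw [div_eq_div_iff hβ₁.ne' hβ.ne', eq_div_iff hdetR]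
    constructor <;> intro h <;> nlinarith [h]
  · intro c c' hcc
    rw [Set.disjoint_left]
    rintro ⟨a, b⟩ h1 h2
    simp only [Set.mem_setOf_eq] at h1 h2
    exact hcc (h1 ▸ h2 ▸ rfl)
end
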